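/- Let λ>0, c>0, t>0 and (x₀,y₀)∈ℝ². For every r with 0 < r < ct − √(x₀²+y₀²), the function F(r) = (λ/(2πc)) e^{−λt} ∬_{{(x,y): x²+y²≤r²}} e^{(λ/c)√(c²t²−(x−x₀)²−(y−y₀)²)} / √(c²t²−(x−x₀)²−(y−y₀)²) dx dy (the absolutely continuous part of P{R(t)≤r}) is differentiable at r with derivative f_R(r,t) = (λ/(2πc)) r e^{−λt} ∫₀^{2π} e^{(λ/c)√(A(θ))} / √(A(θ)) dθ, where A(θ) = c²t² − r² − x₀² − y₀² + 2r(x₀cosθ + y₀sinθ). -/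

import Mathlib

/-!
In polar coordinates `∫_{disc s} g = ∫₀ˢ ρ ∫₀^{2π} g(ρ cos θ, ρ sin θ) dθ dρ`, so for continuous `g`
the fundamental theorem of calculus differentiates the disc integral in `s`. The flight density is
singular only on the circle of radius `ct` around `(x₀, y₀)`; on a disc of radius slightly larger
than `r` its radicand stays above some `δ > 0`, so there it agrees with the continuous function
obtained by replacing the radicand `A` with `max A δ`.
-/

open MeasureTheory Real Set Filter Topology intervalIntegral

def disc (s : ℝ) : Set (ℝ × ℝ) := {q | q.1 ^ 2 + q.2 ^ 2 ≤ s ^ 2}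

lemma mul_cos_sq_add_mul_sin_sq (ρ θ : ℝ) : (ρ * cos θ) ^ 2 + (ρ * sin θ) ^ 2 = ρ ^ 2 := by
  linear_combination ρ ^ 2 * cos_sq_add_sin_sq θ

lemma measurableSet_disc (s : ℝ) : MeasurableSet (disc s) :=
  measurableSet_le (by fun_prop) measurable_const

lemma disc_neg (s : ℝ) : disc (-s) = disc s := by
  simp [disc]

lemma disc_subset_disc {s ρ : ℝ} (h : |s| ≤ ρ) : disc s ⊆ disc ρ := fun _ hp =>
  hp.trans (by simpa only [sq_abs] using pow_le_pow_left₀ (abs_nonneg s) h 2)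

lemma polar_mem_disc (ρ θ : ℝ) : (ρ * cos θ, ρ * sin θ) ∈ disc ρ :=
  (mul_cos_sq_add_mul_sin_sq ρ θ).le

lemma periodic_polar {α : Type*} (g : ℝ × ℝ → α) (ρ : ℝ) :
    Function.Periodic (fun θ => g (ρ * cos θ, ρ * sin θ)) (2 * π) := fun θ => by
  simp only [cos_add_two_pi, sin_add_two_pi]

lemma polarCoord_target_inter_preimage_disc {s : ℝ} (hs : 0 ≤ s) :
    polarCoord.target ∩ polarCoord.symm ⁻¹' disc s = Ioc 0 s ×ˢ Ioo (-π) π := by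
  ext ⟨ρ, θ⟩
  simp only [polarCoord_target, mem_inter_iff, mem_prod, mem_Ioi, mem_preimage,
    polarCoord_symm_apply, disc, mem_ofPred_eq, mul_cos_sq_add_mul_sin_sq, mem_Ioc]
  constructor
  · rintro ⟨⟨hρ, hθ⟩, hρs⟩
    exact ⟨⟨hρ, (pow_le_pow_iff_left₀ hρ.le hs two_ne_zero).1 hρs⟩, hθ⟩
  · rintro ⟨⟨hρ, hρs⟩, hθ⟩
    exact ⟨⟨hρ, hθ⟩, pow_le_pow_left₀ hρ.le hρs 2⟩

section AngularIntegral

variable {E : Type*} [NormedAddCommGroup E] [NormedSpace ℝ E] {g : ℝ × ℝ → E}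

noncomputable def angularIntegral (g : ℝ × ℝ → E) (ρ : ℝ) : E :=
  ∫ θ in (0 : ℝ)..2 * π, g (ρ * cos θ, ρ * sin θ)

lemma angularIntegral_eq_integral_Ioo (ρ : ℝ) :
    angularIntegral g ρ = ∫ θ in Ioo (-π) π, g (ρ * cos θ, ρ * sin θ) := by
  have h := (periodic_polar g ρ).intervalIntegral_add_eq 0 (-π)
  rw [zero_add, show -π + 2 * π = π by ring] at h
  rw [angularIntegral, h, integral_of_le (by linarith [pi_pos]), integral_Ioc_eq_integral_Ioo]

lemma angularIntegral_neg (ρ : ℝ) :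
    angularIntegral g (-ρ) = angularIntegral g ρ := by
  calc angularIntegral g (-ρ)
      = ∫ θ in (0 : ℝ)..2 * π, g (ρ * cos (θ + π), ρ * sin (θ + π)) := by
        simp only [angularIntegral, cos_add_pi, sin_add_pi, neg_mul, mul_neg]
    _ = angularIntegral g ρ := by
        rw [integral_comp_add_right (fun θ => g (ρ * cos θ, ρ * sin θ)), zero_add, add_comm,
          (periodic_polar g ρ).intervalIntegral_add_eq π 0, zero_add, angularIntegral]

lemma continuous_angularIntegral (hg : Continuous g) :
    Continuous (angularIntegral g) :=
  continuous_parametric_intervalIntegral_of_continuous' (by fun_prop) _ _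

lemma integral_disc_eq_integral_smul_angularIntegral_of_nonneg (hg : Continuous g) {s : ℝ}
    (hs : 0 ≤ s) : ∫ p in disc s, g p = ∫ ρ in 0..s, ρ • angularIntegral g ρ := by
  have hcont : Continuous fun p : ℝ × ℝ => p.1 • g (polarCoord.symm p) := by fun_prop
  have hint : IntegrableOn (fun p : ℝ × ℝ => p.1 • g (polarCoord.symm p))
      (Ioc 0 s ×ˢ Ioo (-π) π) :=
    (hcont.continuousOn.integrableOn_compact (isCompact_Icc.prod isCompact_Icc)).mono_set
      (prod_mono Ioc_subset_Icc_self Ioo_subset_Icc_self)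
  calc ∫ p in disc s, g p
      = ∫ p in polarCoord.target, p.1 • (disc s).indicator g (polarCoord.symm p) := by
        rw [← MeasureTheory.integral_indicator (measurableSet_disc s),
          integral_comp_polarCoord_symm]
    _ = ∫ p in Ioc 0 s ×ˢ Ioo (-π) π, p.1 • g (polarCoord.symm p) := by
        simp_rw [← indicator_comp_right, ← indicator_smul_apply]
        rw [setIntegral_indicator ((measurableSet_disc s).preimage
          continuous_polarCoord_symm.measurable), polarCoord_target_inter_preimage_disc hs]
        rfl
    _ = ∫ ρ in Ioc 0 s, ∫ θ in Ioo (-π) π, ρ • g (ρ * cos θ, ρ * sin θ) :=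
        setIntegral_prod _ hint
    _ = ∫ ρ in 0..s, ρ • angularIntegral g ρ := by
        simp_rw [integral_of_le hs, MeasureTheory.integral_smul, angularIntegral_eq_integral_Ioo]

lemma integral_disc_eq_integral_smul_angularIntegral (hg : Continuous g) (s : ℝ) :
    ∫ p in disc s, g p = ∫ ρ in 0..s, ρ • angularIntegral g ρ := by
  rcases le_total 0 s with hs | hs
  · exact integral_disc_eq_integral_smul_angularIntegral_of_nonneg hg hs
  · rw [← disc_neg, integral_disc_eq_integral_smul_angularIntegral_of_nonneg hg (neg_nonneg.2 hs)]
    have h := integral_comp_neg (a := 0) (b := s) fun ρ => ρ • angularIntegral g ρ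
    simp only [angularIntegral_neg, neg_smul, intervalIntegral.integral_neg, neg_zero] at h
    rw [integral_symm, ← h, neg_neg]

lemma hasDerivAt_integral_disc [CompleteSpace E] (hg : Continuous g) (r : ℝ) :
    HasDerivAt (fun s => ∫ p in disc s, g p) (r • angularIntegral g r) r := by
  simp_rw [integral_disc_eq_integral_smul_angularIntegral hg]
  exact ((continuous_id.smul (continuous_angularIntegral hg)).integral_hasStrictDerivAt
    0 r).hasDerivAt

lemma hasDerivAt_integral_disc_of_eqOn [CompleteSpace E] {g' : ℝ × ℝ → E} (hg' : Continuous g')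
    {ρ r : ℝ} (hgg' : EqOn g g' (disc ρ)) (hr : |r| < ρ) :
    HasDerivAt (fun s => ∫ p in disc s, g p) (r • angularIntegral g r) r := by
  have hnear : (fun s => ∫ p in disc s, g' p) =ᶠ[𝓝 r] fun s => ∫ p in disc s, g p := by
    filter_upwards [(continuous_abs.tendsto r).eventually (gt_mem_nhds hr)] with s hs
    exact setIntegral_congr_fun (measurableSet_disc s)
      fun p hp => (hgg' (disc_subset_disc hs.le hp)).symm
  have hcircle : angularIntegral g r = angularIntegral g' r :=
    intervalIntegral.integral_congr fun θ _ => hgg' (disc_subset_disc hr.le (polar_mem_disc r θ))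
  rw [hcircle]
  exact (hasDerivAt_integral_disc hg' r).congr_of_eventuallyEq hnear.symm

end AngularIntegral

lemma sub_sq_add_sub_sq_le_of_mem_disc {ρ : ℝ} (hρ : 0 ≤ ρ) {p : ℝ × ℝ} (hp : p ∈ disc ρ)
    (x₀ y₀ : ℝ) : (p.1 - x₀) ^ 2 + (p.2 - y₀) ^ 2 ≤ (ρ + √(x₀ ^ 2 + y₀ ^ 2)) ^ 2 := by
  have hΓ : √(x₀ ^ 2 + y₀ ^ 2) ^ 2 = x₀ ^ 2 + y₀ ^ 2 := sq_sqrt (by positivity)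
  have hcs : (p.1 * x₀ + p.2 * y₀) ^ 2 ≤ (ρ * √(x₀ ^ 2 + y₀ ^ 2)) ^ 2 := by
    nlinarith [sq_nonneg (p.1 * y₀ - p.2 * x₀),
      mul_le_mul_of_nonneg_right hp (by positivity : (0 : ℝ) ≤ x₀ ^ 2 + y₀ ^ 2)]
  have := (abs_le_of_sq_le_sq' hcs (by positivity)).1
  nlinarith [hp.out]

theorem planar_random_flight_radial_density
    (lam c t x₀ y₀ : ℝ)
    (r : ℝ) (hr : 0 < r) (hr' : r < c * t - Real.sqrt (x₀ ^ 2 + y₀ ^ 2)) :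
    HasDerivAt
      (fun s : ℝ => lam / (2 * π * c) * Real.exp (-lam * t) *
        ∫ p in {q : ℝ × ℝ | q.1 ^ 2 + q.2 ^ 2 ≤ s ^ 2},
          Real.exp (lam / c *
              Real.sqrt (c ^ 2 * t ^ 2 - (p.1 - x₀) ^ 2 - (p.2 - y₀) ^ 2)) /
            Real.sqrt (c ^ 2 * t ^ 2 - (p.1 - x₀) ^ 2 - (p.2 - y₀) ^ 2))
      (lam / (2 * π * c) * r * Real.exp (-lam * t) *
        ∫ θ in (0:ℝ)..(2 * π),
          Real.exp (lam / c * Real.sqrt (c ^ 2 * t ^ 2 - r ^ 2 - x₀ ^ 2 - y₀ ^ 2 +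
              2 * r * (x₀ * Real.cos θ + y₀ * Real.sin θ))) /
            Real.sqrt (c ^ 2 * t ^ 2 - r ^ 2 - x₀ ^ 2 - y₀ ^ 2 +
              2 * r * (x₀ * Real.cos θ + y₀ * Real.sin θ)))
      r := by
  obtain ⟨ρ, hrρ, hρ⟩ := exists_between hr'
  set A : ℝ × ℝ → ℝ := fun p => c ^ 2 * t ^ 2 - (p.1 - x₀) ^ 2 - (p.2 - y₀) ^ 2
  set δ := c ^ 2 * t ^ 2 - (ρ + √(x₀ ^ 2 + y₀ ^ 2)) ^ 2
  have hδ : 0 < δ := by nlinarith [sqrt_nonneg (x₀ ^ 2 + y₀ ^ 2)]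
  have hAδ (p : ℝ × ℝ) (hp : p ∈ disc ρ) : δ ≤ A p := by
    linarith [sub_sq_add_sub_sq_le_of_mem_disc (hr.trans hrρ).le hp x₀ y₀]
  have hk : ContinuousOn (fun a => exp (lam / c * √a) / √a) (Ioi 0) :=
    ContinuousOn.div (by fun_prop) (by fun_prop) fun a ha => (sqrt_pos.2 ha).ne'
  have hcont : Continuous fun p => exp (lam / c * √(max (A p) δ)) / √(max (A p) δ) :=
    hk.comp_continuous (by fun_prop) fun p => hδ.trans_le (le_max_right _ _)
  have heq : EqOn (fun p => exp (lam / c * √(A p)) / √(A p))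
      (fun p => exp (lam / c * √(max (A p) δ)) / √(max (A p) δ)) (disc ρ) :=
    fun p hp => by simp only [max_eq_left (hAδ p hp)]
  have hpolar (θ : ℝ) : A (r * cos θ, r * sin θ) =
      c ^ 2 * t ^ 2 - r ^ 2 - x₀ ^ 2 - y₀ ^ 2 + 2 * r * (x₀ * cos θ + y₀ * sin θ) := by
    linear_combination (-r ^ 2) * sin_sq_add_cos_sq θ
  refine ((hasDerivAt_integral_disc_of_eqOn hcont heq (by rwa [abs_of_pos hr])).const_mul
    (lam / (2 * π * c) * exp (-lam * t))).congr_deriv ?_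
  simp only [angularIntegral, hpolar, smul_eq_mul]
  ring
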